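/- Let K be a compact (in the weak-* topology) set of Borel probability measures on G such that every μ ∈ K satisfies the 'no deterministic images' condition. Then for every ε > 0 there exists m ∈ ℕ such that for every finite sequence μ₁, μ₂, …, μ_m of measures in K and every x ∈ X, the support of μ_m * μ_{m−1} * … * μ₁ * δ_x is ε-dense in X (i.e., every point of X lies within distance ε of this support). -/

import Mathlib

open MeasureTheory Topology Filter Metric Set

variable {X : Type*} [MetricSpace X] [CompactSpace X]

/-- The group of isometries of `X`, with the sup metric
`d_C(g,h) = sup_{x ∈ X} d (g x) (h x)` (induced from `C(X, X)`). -/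
noncomputable instance : MetricSpace (X ≃ᵢ X) :=
  MetricSpace.induced (fun g => (⟨g, g.continuous⟩ : C(X, X)))
    (fun g h hgh => by
      ext x
      exact DFunLike.congr_fun hgh x)
    inferInstance

noncomputable instance : MeasurableSpace (X ≃ᵢ X) := borel _
instance : BorelSpace (X ≃ᵢ X) := ⟨rfl⟩

/-- The (closed) support of a measure: the set of points all of whose open
neighborhoods have positive measure. -/
def msupp {α : Type*} [TopologicalSpace α] [MeasurableSpace α] (μ : Measure α) : Set α :=
  {x | ∀ U : Set α, IsOpen U → x ∈ U → 0 < μ U}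

/-- `μ` satisfies the *no deterministic images* condition: there is no pair of proper
(nonempty) closed subsets `A, B ⊆ X` with `g '' A = B` for every `g ∈ supp μ`. -/
def NoDetImages (μ : Measure (X ≃ᵢ X)) : Prop :=
  ¬ ∃ A B : Set X, A.Nonempty ∧ B.Nonempty ∧ IsClosed A ∧ IsClosed B ∧
      A ≠ Set.univ ∧ B ≠ Set.univ ∧ ∀ g ∈ msupp μ, g '' A = B

/-- `μ * ν`: the pushforward of `μ ⊗ ν` under the action map `(g, x) ↦ g x`. -/
noncomputable def actConv [MeasurableSpace X] (μ : Measure (X ≃ᵢ X)) (ν : Measure X) :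
    Measure X :=
  (μ.prod ν).map (fun p => p.1 p.2)

/-- `convSeq μ ν n = μₙ * μₙ₋₁ * ⋯ * μ₁ * ν` (with `μ (k-1)` playing the role of `μₖ`). -/
noncomputable def convSeq [MeasurableSpace X] (μ : ℕ → Measure (X ≃ᵢ X)) (ν : Measure X) :
    ℕ → Measure X
  | 0 => ν
  | n + 1 => actConv (μ n) (convSeq μ ν n)

section MsuppBasic
variable {α : Type*} [TopologicalSpace α] [MeasurableSpace α] {μ : Measure α}


lemma isClosed_msupp (μ : Measure α) : IsClosed (msupp μ) := by
  rw [← isOpen_compl_iff]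
  rw [isOpen_iff_forall_mem_open]
  intro x hx
  simp only [msupp, mem_compl_iff, mem_setOf_eq, not_forall] at hx
  obtain ⟨U, hU, hxU, hpos⟩ := hx
  exact ⟨U, fun y hy hall => hpos (hall U hU hy), hU, hxU⟩

lemma msupp_compl_null [SecondCountableTopology α] [OpensMeasurableSpace α] (μ : Measure α) :
    μ (msupp μ)ᶜ = 0 := by
  have hsub : (msupp μ)ᶜ ⊆ ⋃ V ∈ {V ∈ TopologicalSpace.countableBasis α | μ V = 0}, V := by
    intro x hx
    simp only [msupp, mem_compl_iff, mem_setOf_eq, not_forall] at hx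
    obtain ⟨U, hU, hxU, hpos⟩ := hx
    have hμU : μ U = 0 := by simpa using hpos
    obtain ⟨V, hV, hxV, hVU⟩ :=
      (TopologicalSpace.isBasis_countableBasis α).exists_subset_of_mem_open hxU hU
    exact mem_biUnion ⟨hV, le_antisymm (le_trans (measure_mono hVU) hμU.le) (zero_le)⟩ hxV
  refine le_antisymm (le_trans (measure_mono hsub) (le_of_eq ?_)) (zero_le)
  exact (measure_biUnion_null_iff ((TopologicalSpace.countable_countableBasis α).mono
    (sep_subset _ _))).mpr (fun V hV => hV.2)

lemma msupp_nonempty [SecondCountableTopology α] [OpensMeasurableSpace α]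
    (μ : Measure α) [IsProbabilityMeasure μ] : (msupp μ).Nonempty := by
  by_contra h
  rw [not_nonempty_iff_eq_empty] at h
  have := msupp_compl_null μ
  rw [h, compl_empty] at this
  simp [measure_univ] at this

lemma msupp_inter_nonempty [SecondCountableTopology α] [OpensMeasurableSpace α]
    {U : Set α} (hU : IsOpen U) (hpos : 0 < μ U) : (U ∩ msupp μ).Nonempty := by
  by_contra h
  rw [not_nonempty_iff_eq_empty] at h
  have hsub : U ⊆ (msupp μ)ᶜ := fun x hx => fun hm => (eq_empty_iff_forall_notMem.mp h x) ⟨hx, hm⟩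
  have := le_trans (measure_mono hsub) (msupp_compl_null μ).le
  exact absurd (le_antisymm this (zero_le)) hpos.ne'

end MsuppBasic

lemma iso_isometry : Isometry (fun g : X ≃ᵢ X => (⟨g, g.continuous⟩ : C(X, X))) := fun _ _ => rfl
instance : SecondCountableTopology (X ≃ᵢ X) :=
  iso_isometry.isEmbedding.secondCountableTopology
lemma act_cont : Continuous (fun p : (X ≃ᵢ X) × X => p.1 p.2) := by
  have : Continuous ((fun fx : C(X,X) × X => fx.1 fx.2) ∘
      Prod.map (fun g : X ≃ᵢ X => (⟨g, g.continuous⟩ : C(X, X))) id) :=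
    continuous_eval.comp ((iso_isometry.continuous).prodMap continuous_id)
  exact this

section Act
variable [MeasurableSpace X] [BorelSpace X]

lemma isProbabilityMeasure_actConv (μ : Measure (X ≃ᵢ X)) (ν : Measure X)
    [IsProbabilityMeasure μ] [IsProbabilityMeasure ν] :
    IsProbabilityMeasure (actConv μ ν) :=
  Measure.isProbabilityMeasure_map act_cont.measurable.aemeasurable

lemma isProbabilityMeasure_convSeq (μ : ℕ → Measure (X ≃ᵢ X)) (ν : Measure X)
    [IsProbabilityMeasure ν] (hμ : ∀ n, IsProbabilityMeasure (μ n)) (n : ℕ) :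
    IsProbabilityMeasure (convSeq μ ν n) := by
  induction n with
  | zero => simpa [convSeq] using ‹IsProbabilityMeasure ν›
  | succ n ih =>
    have := hμ n
    exact isProbabilityMeasure_actConv (μ n) (convSeq μ ν n)

lemma mem_msupp_actConv {μ : Measure (X ≃ᵢ X)} {ν : Measure X} [SFinite ν]
    {g : X ≃ᵢ X} {x : X} (hg : g ∈ msupp μ) (hx : x ∈ msupp ν) :
    g x ∈ msupp (actConv μ ν) := by
  intro U hU hgx
  rw [actConv, Measure.map_apply act_cont.measurable hU.measurableSet]
  have hpre : IsOpen ((fun p : (X ≃ᵢ X) × X => p.1 p.2) ⁻¹' U) := hU.preimage act_cont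
  obtain ⟨U₁, U₂, h1, h2, hg1, hx2, hsub⟩ := isOpen_prod_iff.mp hpre g x hgx
  calc (0 : ENNReal) < μ U₁ * ν U₂ :=
        ENNReal.mul_pos (hg U₁ h1 hg1).ne' (hx U₂ h2 hx2).ne'
    _ = (μ.prod ν) (U₁ ×ˢ U₂) := (Measure.prod_prod ..).symm
    _ ≤ _ := measure_mono hsub

lemma mem_msupp_dirac (x : X) : x ∈ msupp (Measure.dirac x) := by
  intro U hU hx
  rw [Measure.dirac_apply' _ hU.measurableSet]
  simp [indicator, hx]

end Act


lemma exists_growth (μ : Measure (X ≃ᵢ X)) [IsProbabilityMeasure μ] (hnd : NoDetImages μ)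
    {A : Set X} (hAc : IsClosed A) (hne : A.Nonempty) (hproper : A ≠ univ) :
    ∃ g ∈ msupp μ, ∃ h ∈ msupp μ, ∃ a ∈ A, 0 < infDist (h a) (g '' A) := by
  by_contra hcon
  push_neg at hcon
  have himg : ∀ g ∈ msupp μ, ∀ h ∈ msupp μ, h '' A ⊆ g '' A := by
    intro g hg h hh x hx
    obtain ⟨a, ha, rfl⟩ := hx
    have hclosed : IsClosed (g '' A) := ((hAc.isCompact).image g.continuous).isClosed
    have h0 : infDist (h a) (g '' A) = 0 :=
      le_antisymm (hcon g hg h hh a ha) infDist_nonneg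
    exact (hclosed.mem_iff_infDist_zero (hne.image g)).mpr h0
  obtain ⟨g₀, hg₀⟩ := msupp_nonempty μ
  refine hnd ⟨A, g₀ '' A, hne, hne.image g₀, hAc,
    ((hAc.isCompact).image g₀.continuous).isClosed, hproper, ?_,
    fun g hg => le_antisymm (himg g₀ hg₀ g hg) (himg g hg g₀ hg₀)⟩
  intro huniv
  apply hproper
  ext x
  simp only [mem_univ, iff_true]
  have hx : g₀ x ∈ g₀ '' A := huniv ▸ mem_univ _
  obtain ⟨a, ha, hax⟩ := hx
  rwa [← g₀.injective hax]

lemma isOpen_pos_measure {Γ : Type*} [MeasurableSpace Γ] [PseudoEMetricSpace Γ]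
    [OpensMeasurableSpace Γ] {U : Set Γ} (hU : IsOpen U) :
    IsOpen {ν : ProbabilityMeasure Γ | 0 < (ν : Measure Γ) U} := by
  rw [isOpen_iff_mem_nhds]
  intro ν hν
  have h := ProbabilityMeasure.le_liminf_measure_open_of_tendsto (μ := ν)
      (μs := (id : ProbabilityMeasure Γ → ProbabilityMeasure Γ)) (L := 𝓝 ν) tendsto_id hU
  have h2 : ∀ᶠ ρ in 𝓝 ν, (0 : ENNReal) < ((id ρ : ProbabilityMeasure Γ) : Measure Γ) U :=
    eventually_lt_of_lt_liminf (lt_of_lt_of_le hν h)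
  exact h2

section Uniform
variable [MeasurableSpace X] [BorelSpace X]

lemma ne_top_hd {s t : Set X} (hs : s.Nonempty) (ht : t.Nonempty) :
    EMetric.hausdorffEdist s t ≠ ⊤ :=
  hausdorffEdist_ne_top_of_nonempty_of_bounded hs ht
    (isCompact_univ.isBounded.subset (subset_univ s))
    (isCompact_univ.isBounded.subset (subset_univ t))

lemma apply_dist_le (g g' : X ≃ᵢ X) (b : X) : dist (g b) (g' b) ≤ dist g g' :=
  ContinuousMap.dist_apply_le_dist (f := (⟨g, g.continuous⟩ : C(X,X)))
    (g := (⟨g', g'.continuous⟩ : C(X,X))) b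

lemma image_hd_le (g g' : X ≃ᵢ X) {B : Set X} (hB : B.Nonempty) :
    hausdorffDist (g '' B) (g' '' B) ≤ dist g g' := by
  apply hausdorffDist_le_of_mem_dist dist_nonneg
  · rintro x ⟨b, hb, rfl⟩
    exact ⟨g' b, mem_image_of_mem _ hb, apply_dist_le g g' b⟩
  · rintro x ⟨b, hb, rfl⟩
    exact ⟨g b, mem_image_of_mem _ hb, by rw [dist_comm]; exact apply_dist_le g g' b⟩

lemma uniform_growth [Nonempty X]
    (K : Set (ProbabilityMeasure (X ≃ᵢ X))) (hK : IsCompact K)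
    (hKnd : ∀ μ ∈ K, NoDetImages (μ : Measure (X ≃ᵢ X)))
    {ε : ℝ} (hε : 0 < ε) :
    ∃ δ : ℝ, 0 < δ ∧ ∀ μ ∈ K, ∀ A : Set X, IsClosed A → A.Nonempty →
      (∃ y, ε ≤ infDist y A) →
      ∃ g ∈ msupp (μ : Measure (X ≃ᵢ X)), ∃ h ∈ msupp (μ : Measure (X ≃ᵢ X)),
        ∃ a ∈ A, δ ≤ infDist (h a) (g '' A) := by
  classical
  set 𝒟 : Set (TopologicalSpace.NonemptyCompacts X) := {A | ∃ y, ε ≤ infDist y (A : Set X)} with h𝒟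
  have hDclosed : IsClosed 𝒟 := by
    rw [← isOpen_compl_iff, isOpen_iff_forall_mem_open]
    intro A hA
    simp only [h𝒟, mem_compl_iff, mem_setOf_eq, not_exists, not_le] at hA
    obtain ⟨y₀, -, hy₀⟩ := isCompact_univ.exists_isMaxOn univ_nonempty
      ((continuous_infDist_pt (A : Set X)).continuousOn)
    set c := infDist y₀ (A : Set X) with hc
    have hcε : c < ε := hA y₀
    refine ⟨Metric.ball A (ε - c), ?_, Metric.isOpen_ball, by simp [sub_pos.mpr hcε]⟩
    intro A' hA'
    simp only [mem_compl_iff, h𝒟, mem_setOf_eq, not_exists, not_le]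
    intro y
    have h1 : infDist y (A' : Set X) ≤ infDist y (A : Set X)
        + hausdorffDist (A : Set X) (A' : Set X) :=
      infDist_le_infDist_add_hausdorffDist (ne_top_hd A.nonempty A'.nonempty)
    have h2 : infDist y (A : Set X) ≤ c := hy₀ (mem_univ y)
    have h3 : hausdorffDist (A : Set X) (A' : Set X) < ε - c := by
      rw [mem_ball] at hA'
      rw [hausdorffDist_comm]
      calc hausdorffDist (A' : Set X) (A : Set X) = dist A' A :=
            Metric.NonemptyCompacts.dist_eq.symm
        _ < ε - c := hA'
    linarith
  have hDcompact : IsCompact 𝒟 := hDclosed.isCompact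
  set 𝒮 : Set (ProbabilityMeasure (X ≃ᵢ X) × TopologicalSpace.NonemptyCompacts X) := K ×ˢ 𝒟 with h𝒮
  have hScompact : IsCompact 𝒮 := hK.prod hDcompact
  -- key local lemma
  have key : ∀ p ∈ 𝒮, ∃ c : ℝ, 0 < c ∧ ∃ W : Set (ProbabilityMeasure (X ≃ᵢ X) × TopologicalSpace.NonemptyCompacts X),
      IsOpen W ∧ p ∈ W ∧ ∀ q ∈ W,
        ∃ g ∈ msupp (q.1 : Measure (X ≃ᵢ X)), ∃ h ∈ msupp (q.1 : Measure (X ≃ᵢ X)),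
          ∃ a ∈ (q.2 : Set X), c ≤ infDist (h a) (g '' (q.2 : Set X)) := by
    rintro ⟨μ, A₀⟩ ⟨hμK, hA𝒟⟩
    set A : Set X := (A₀ : Set X) with hAdef
    have hAc : IsClosed A := A₀.isCompact.isClosed
    have hAne : A.Nonempty := A₀.nonempty
    have hproper : A ≠ univ := by
      obtain ⟨y, hy⟩ := hA𝒟
      intro hu
      have : infDist y A = 0 := by rw [hu]; exact infDist_zero_of_mem (mem_univ y)
      linarith
    have : IsProbabilityMeasure (μ : Measure (X ≃ᵢ X)) := μ.2
    obtain ⟨g, hg, h, hh, a, ha, hc0⟩ := exists_growth (μ : Measure (X ≃ᵢ X)) (hKnd μ hμK) hAc hAne hproper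
    set c0 := infDist (h a) (g '' A) with hc0def
    set r := c0 / 6 with hr
    have hrpos : 0 < r := by positivity
    refine ⟨r, hrpos, ({ν : ProbabilityMeasure (X ≃ᵢ X) | 0 < (ν : Measure (X ≃ᵢ X)) (ball g r)} ∩
        {ν : ProbabilityMeasure (X ≃ᵢ X) | 0 < (ν : Measure (X ≃ᵢ X)) (ball h r)}) ×ˢ Metric.ball A₀ r,
      ((isOpen_pos_measure isOpen_ball).inter (isOpen_pos_measure isOpen_ball)).prod
        Metric.isOpen_ball, ⟨⟨hg _ isOpen_ball (mem_ball_self hrpos),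
        hh _ isOpen_ball (mem_ball_self hrpos)⟩, mem_ball_self hrpos⟩, ?_⟩
    rintro ⟨ν, A₁⟩ ⟨⟨hν1, hν2⟩, hA₁⟩
    have : IsProbabilityMeasure (ν : Measure (X ≃ᵢ X)) := ν.2
    obtain ⟨g', hg'b, hg's⟩ := msupp_inter_nonempty isOpen_ball hν1
    obtain ⟨h', hh'b, hh's⟩ := msupp_inter_nonempty isOpen_ball hν2
    set B : Set X := (A₁ : Set X) with hBdef
    have hBne : B.Nonempty := A₁.nonempty
    have hdAB : hausdorffDist A B < r := by
      rw [mem_ball] at hA₁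
      rw [hausdorffDist_comm]
      calc hausdorffDist B A = dist A₁ A₀ := Metric.NonemptyCompacts.dist_eq.symm
        _ < r := hA₁
    obtain ⟨a', ha', haa'⟩ := exists_dist_lt_of_hausdorffDist_lt ha hdAB
      (ne_top_hd hAne hBne)
    refine ⟨g', hg's, h', hh's, a', ha', ?_⟩
    -- distance chain
    have e1 : c0 ≤ infDist (h a) (g' '' B) + hausdorffDist (g' '' B) (g '' A) := by
      rw [hc0def]
      exact infDist_le_infDist_add_hausdorffDist (ne_top_hd (hBne.image g') (hAne.image g))
    have e2 : infDist (h a) (g' '' B) ≤ infDist (h' a') (g' '' B) + dist (h a) (h' a') :=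
      infDist_le_infDist_add_dist
    have e3 : dist (h a) (h' a') ≤ dist h h' + dist a a' :=
      le_trans (dist_triangle _ (h' a) _)
        (add_le_add (apply_dist_le h h' a) (le_of_eq (h'.isometry.dist_eq a a')))
    have e4 : hausdorffDist (g' '' B) (g '' A) ≤ dist g' g + hausdorffDist B A := by
      calc hausdorffDist (g' '' B) (g '' A)
          ≤ hausdorffDist (g' '' B) (g '' B) + hausdorffDist (g '' B) (g '' A) :=
            hausdorffDist_triangle (ne_top_hd (hBne.image g') (hBne.image g))
        _ ≤ dist g' g + hausdorffDist B A := by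
            refine add_le_add (image_hd_le g' g hBne) (le_of_eq ?_)
            exact hausdorffDist_image g.isometry
    have hgg' : dist g' g < r := mem_ball.mp hg'b
    have hhh' : dist h h' < r := by rw [dist_comm]; exact mem_ball.mp hh'b
    have hBA : hausdorffDist B A < r := by rwa [hausdorffDist_comm]
    have h6 : c0 = 6 * r := by rw [hr]; ring
    linarith [infDist_nonneg (x := h' a') (s := g' '' B)]
  choose c hcpos W hW using fun p : ↥𝒮 => key p p.2
  choose hWopen hWmem hWgood using hW
  have hcover : 𝒮 ⊆ ⋃ p : ↥𝒮, W p := fun q hq => mem_iUnion.mpr ⟨⟨q, hq⟩, hWmem _⟩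
  obtain ⟨t, ht⟩ := hScompact.elim_finite_subcover W hWopen hcover
  by_cases hte : t.Nonempty
  · refine ⟨t.inf' hte c, ?_, ?_⟩
    · rw [Finset.lt_inf'_iff]; exact fun p _ => hcpos p
    · intro μ hμ A hAc hAne hwit
      have hqS : ((μ, ⟨⟨A, hAc.isCompact⟩, hAne⟩) :
          ProbabilityMeasure (X ≃ᵢ X) × TopologicalSpace.NonemptyCompacts X) ∈ 𝒮 := ⟨hμ, hwit⟩
      obtain ⟨p, hpt, hqW⟩ := mem_iUnion₂.mp (ht hqS)
      obtain ⟨g, hg, h, hh, a, ha, hle⟩ := hWgood p _ hqW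
      exact ⟨g, hg, h, hh, a, ha, le_trans (Finset.inf'_le c hpt) hle⟩
  · refine ⟨1, one_pos, ?_⟩
    intro μ hμ A hAc hAne hwit
    have hqS : ((μ, ⟨⟨A, hAc.isCompact⟩, hAne⟩) :
        ProbabilityMeasure (X ≃ᵢ X) × TopologicalSpace.NonemptyCompacts X) ∈ 𝒮 := ⟨hμ, hwit⟩
    have := ht hqS
    simp [Finset.not_nonempty_iff_eq_empty.mp hte] at this

end Uniform

lemma convSeq_succ [MeasurableSpace X] (μ : ℕ → Measure (X ≃ᵢ X)) (ν : Measure X) (n : ℕ) :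
    convSeq μ ν (n + 1) = actConv (μ n) (convSeq μ ν n) := rfl

lemma sep_bound {δ : ℝ} (hδ : 0 < δ) :
    ∃ N : ℕ, ∀ S : Finset X, (∀ p ∈ S, ∀ q ∈ S, p ≠ q → δ ≤ dist p q) → S.card ≤ N := by
  classical
  obtain ⟨s, -, hsfin, hscov⟩ :=
    finite_cover_balls_of_compact (isCompact_univ (X := X)) (e := δ/2) (by positivity)
  refine ⟨hsfin.toFinset.card, fun S hS => ?_⟩
  have hchoice : ∀ p : X, ∃ y ∈ s, p ∈ ball y (δ/2) := by
    intro p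
    simpa using hscov (mem_univ p)
  choose f hf hfb using hchoice
  apply Finset.card_le_card_of_injOn f (fun p _ => hsfin.mem_toFinset.mpr (hf p))
  intro p hp q hq hfq
  by_contra hne
  have hpb : dist p (f q) < δ/2 := by rw [← hfq]; exact mem_ball.mp (hfb p)
  have hqb : dist (f q) q < δ/2 := by rw [dist_comm]; exact mem_ball.mp (hfb q)
  have h1 : dist p q < δ := by
    calc dist p q ≤ dist p (f q) + dist (f q) q := dist_triangle _ _ _
      _ < δ/2 + δ/2 := add_lt_add hpb hqb
      _ = δ := by ring
  exact absurd (hS p hp q hq hne) (not_le.mpr h1)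


/-- **Proposition (ε-density of the support).** For a weak-* compact set `K` of probability
measures on the isometry group, all satisfying the no-deterministic-images condition, and
any `ε > 0`, there is `m ∈ ℕ` such that for all `μ₁, …, μₘ ∈ K` and every `x ∈ X` the
support of `μₘ * ⋯ * μ₁ * δₓ` is `ε`-dense in `X`. -/
theorem support_eps_dense [MeasurableSpace X] [BorelSpace X]
    (K : Set (ProbabilityMeasure (X ≃ᵢ X))) (hK : IsCompact K)
    (hKnd : ∀ μ ∈ K, NoDetImages (μ : Measure (X ≃ᵢ X))) :
    ∀ ε : ℝ, 0 < ε → ∃ M : ℕ,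
      ∀ μs : ℕ → ProbabilityMeasure (X ≃ᵢ X), (∀ n, μs n ∈ K) →
        ∀ x y : X, ∃ z ∈ msupp (convSeq (fun k => (μs k : Measure (X ≃ᵢ X)))
          (Measure.dirac x) M), dist y z ≤ ε := by
  intro ε hε
  by_cases hXne : Nonempty X
  case neg => exact ⟨0, fun μs _ x y => absurd ⟨x⟩ hXne⟩
  obtain ⟨δ, hδ, hgrow⟩ := uniform_growth K hK hKnd hε
  obtain ⟨N, hN⟩ := sep_bound (X := X) hδ
  refine ⟨N, ?_⟩
  intro μs hμs x y
  classical
  set ν : ℕ → Measure X := convSeq (fun k => ((μs k : Measure (X ≃ᵢ X)))) (Measure.dirac x)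
    with hν
  have hprob : ∀ n, IsProbabilityMeasure (ν n) :=
    fun n => isProbabilityMeasure_convSeq _ _ (fun k => (μs k).2) n
  set A : ℕ → Set X := fun n => msupp (ν n) with hA
  set P : ℕ → Prop := fun n => ∀ w : X, ∃ z ∈ A n, dist w z ≤ ε with hP
  have hstep : ∀ n, ∀ g ∈ msupp ((μs n : Measure (X ≃ᵢ X))), ∀ z ∈ A n, g z ∈ A (n+1) := by
    intro n g hg z hz
    haveI := hprob n
    exact mem_msupp_actConv hg hz
  have hx0 : x ∈ A 0 := mem_msupp_dirac x
  have hsuppne : ∀ n, (msupp ((μs n : Measure (X ≃ᵢ X)))).Nonempty := by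
    intro n
    haveI : IsProbabilityMeasure ((μs n : Measure (X ≃ᵢ X))) := (μs n).2
    exact msupp_nonempty _
  have hAne : ∀ n, (A n).Nonempty := by
    intro n
    induction n with
    | zero => exact ⟨x, hx0⟩
    | succ n ih =>
      obtain ⟨g, hg⟩ := hsuppne n
      obtain ⟨z, hz⟩ := ih
      exact ⟨g z, hstep n g hg z hz⟩
  have hAclosed : ∀ n, IsClosed (A n) := fun n => isClosed_msupp (ν n)
  have hmono : ∀ n, P n → P (n+1) := by
    intro n hPn w
    obtain ⟨g, hg⟩ := hsuppne n
    obtain ⟨z, hz, hdz⟩ := hPn (g.symm w)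
    refine ⟨g z, hstep n g hg z hz, ?_⟩
    calc dist w (g z) = dist (g (g.symm w)) (g z) := by rw [g.apply_symm_apply]
      _ = dist (g.symm w) z := g.isometry.dist_eq _ _
      _ ≤ ε := hdz
  have key : ∃ k ≤ N, P k := by
    by_contra hcon
    push_neg at hcon
    have build : ∀ k : ℕ, k ≤ N → ∃ S : Finset X, (∀ p ∈ S, p ∈ A k) ∧
        (∀ p ∈ S, ∀ q ∈ S, p ≠ q → δ ≤ dist p q) ∧ S.card = k + 1 := by
      intro k
      induction k with
      | zero => exact fun _ => ⟨{x}, by simp [hx0], by simp, by simp⟩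
      | succ k ih =>
        intro hk
        obtain ⟨S, hSA, hSsep, hScard⟩ := ih (le_trans (Nat.le_succ k) hk)
        have hnotP : ¬ P k := hcon k (le_trans (Nat.le_succ k) hk)
        have hwit : ∃ w, ε ≤ infDist w (A k) := by
          simp only [hP, not_forall] at hnotP
          obtain ⟨w, hw⟩ := hnotP
          push_neg at hw
          refine ⟨w, ?_⟩
          obtain ⟨z, hz, hzd⟩ := ((hAclosed k).isCompact).exists_infDist_eq_dist (hAne k) w
          rw [hzd]
          exact le_of_lt (hw z hz)
        obtain ⟨g, hg, h, hh, a, ha, hfar⟩ :=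
          hgrow (μs k) (hμs k) (A k) (hAclosed k) (hAne k) hwit
        have hfarpt : ∀ p ∈ S, δ ≤ dist (h a) (g p) := by
          intro p hp
          exact le_trans hfar (infDist_le_dist_of_mem (mem_image_of_mem g (hSA p hp)))
        have hnotmem : h a ∉ S.image g := by
          intro hmem
          obtain ⟨p, hp, hpeq⟩ := Finset.mem_image.mp hmem
          have := hfarpt p hp
          rw [hpeq] at this
          simp at this
          linarith
        refine ⟨insert (h a) (S.image g), ?_, ?_, ?_⟩
        · intro p hp
          rcases Finset.mem_insert.mp hp with rfl | hp
          · exact hstep k h hh a ha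
          · obtain ⟨q, hq, rfl⟩ := Finset.mem_image.mp hp
            exact hstep k g hg q (hSA q hq)
        · intro p hp q hq hne
          rcases Finset.mem_insert.mp hp with rfl | hp' <;>
            rcases Finset.mem_insert.mp hq with rfl | hq'
          · exact absurd rfl hne
          · obtain ⟨q', hq2, rfl⟩ := Finset.mem_image.mp hq'
            exact hfarpt q' hq2
          · obtain ⟨p', hp2, rfl⟩ := Finset.mem_image.mp hp'
            rw [dist_comm]
            exact hfarpt p' hp2
          · obtain ⟨p', hp2, rfl⟩ := Finset.mem_image.mp hp'
            obtain ⟨q', hq2, rfl⟩ := Finset.mem_image.mp hq'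
            rw [g.isometry.dist_eq]
            exact hSsep p' hp2 q' hq2 (fun hc => hne (by rw [hc]))
        · rw [Finset.card_insert_of_notMem hnotmem,
            Finset.card_image_of_injective S g.injective, hScard]
    obtain ⟨S, -, hSsep, hScard⟩ := build N le_rfl
    have := hN S hSsep
    omega
  obtain ⟨k, hkN, hPk⟩ := key
  have hPN : P N := Nat.le_induction hPk (fun n _ hp => hmono n hp) N hkN
  exact hPN y
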